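/- Rate distortion dimension is bounded by metric mean dimension: for every dynamical system (X,T) with compatible metric d and T-invariant Borel probability measure μ, one has limsup_{ε→0} R(d,μ,ε)/log(1/ε) ≤ limsup_{ε→0} S(X,T,d,ε)/log(1/ε) and liminf_{ε→0} R(d,μ,ε)/log(1/ε) ≤ liminf_{ε→0} S(X,T,d,ε)/log(1/ε). In fact, R(d,μ,ε) ≤ S(X,T,d,ε) for every ε > 0. -/
import Mathlib


open Set Filter Topology ENNReal MeasureTheory Finset

/-- The `ε`-covering number of a set-with-distance-function. -/
noncomputable def covNum {X : Type*} (d : X → X → ℝ) (ε : ℝ) : ℕ :=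
  sInf {n : ℕ | ∃ U : Fin n → Set X, (⋃ i, U i) = Set.univ ∧
    ∀ i, ∀ x ∈ U i, ∀ y ∈ U i, d x y < ε}

/-- The Bowen metric `d_N(x,y) = max_{0 ≤ n < N} d(T^n x, T^n y)`. -/
noncomputable def dynDist {X : Type*} [MetricSpace X] (T : X → X) (N : ℕ)
    (x y : X) : ℝ :=
  ⨆ n : Fin N, dist (T^[(n : ℕ)] x) (T^[(n : ℕ)] y)

/-- `S(X,T,d,ε) = lim_N (1/N)·log₂ #(X,d_N,ε)` (the limit exists by subadditivity,
so it equals the `liminf`). -/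
noncomputable def entS {X : Type*} [MetricSpace X] (T : X → X) (ε : ℝ) : ℝ :=
  Filter.liminf
    (fun N : ℕ => Real.logb 2 ((covNum (dynDist T N) ε : ℕ) : ℝ) / N) Filter.atTop

/-- Mutual information `I(X;Y) = H(X) + H(Y) − H(X,Y)` (base 2) of a joint pmf on a
product of finite sets. -/
noncomputable def finMI {n m : ℕ} (p : Fin n × Fin m → ℝ) : ℝ :=
  (-∑ a, (∑ b, p (a, b)) * Real.logb 2 (∑ b, p (a, b))) +
    (-∑ b, (∑ a, p (a, b)) * Real.logb 2 (∑ a, p (a, b))) -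
    (-∑ q, p q * Real.logb 2 (p q))

/-- Mutual information of a joint distribution `π` on `A × B`: the supremum over
finite measurable partitions (encoded as measurable maps into `Fin n`, `Fin m`) of the
discrete mutual information of the induced joint pmf. -/
noncomputable def mutualInfo {A B : Type*} [MeasurableSpace A] [MeasurableSpace B]
    (π : Measure (A × B)) : ℝ≥0∞ :=
  ⨆ (n : ℕ) (m : ℕ) (P : A → Fin n) (_ : Measurable P) (Q : B → Fin m)
    (_ : Measurable Q),
    ENNReal.ofReal (finMI fun q : Fin n × Fin m =>
      (π {z : A × B | P z.1 = q.1 ∧ Q z.2 = q.2}).toReal)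

/-- The rate distortion function `R(d,μ,ε)`: the infimum of `I(X;Y)/N` over `N ≥ 1`
and joint distributions `π` of `(X, (Y_0,…,Y_{N-1}))` with `Law(X) = μ` and
`E[(1/N)∑_{n<N} d(T^n X, Y_n)] < ε`. -/
noncomputable def rateDistortion {𝒳 : Type*} [MeasurableSpace 𝒳] (T : 𝒳 → 𝒳)
    (d : 𝒳 → 𝒳 → ℝ) (μ : Measure 𝒳) (ε : ℝ) : ℝ≥0∞ :=
  ⨅ (N : ℕ) (_ : 1 ≤ N) (π : Measure (𝒳 × (Fin N → 𝒳)))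
    (_ : IsProbabilityMeasure π) (_ : π.map Prod.fst = μ)
    (_ : ∫ z, (1 / (N : ℝ)) * ∑ n : Fin N, d (T^[(n : ℕ)] z.1) (z.2 n) ∂π < ε),
    mutualInfo π / (N : ℝ≥0∞)

lemma aux_logb_nat_nonneg (n : ℕ) : 0 ≤ Real.logb 2 n := by
  rcases Nat.eq_zero_or_pos n with h | h
  · simp [h]
  · exact Real.logb_nonneg one_lt_two (by exact_mod_cast h)

/-- Entropy of a pmf supported inside `s` is at most `logb 2 s.card`. -/
lemma aux_entropy_le {m : ℕ} (q : Fin m → ℝ) (h0 : ∀ b, 0 ≤ q b)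
    (h1 : ∑ b, q b = 1) (s : Finset (Fin m)) (hs : ∀ b, q b ≠ 0 → b ∈ s) :
    (-∑ b, q b * Real.logb 2 (q b)) ≤ Real.logb 2 s.card := by
  classical
  set t : Finset (Fin m) := Finset.univ.filter (fun b => q b ≠ 0) with ht
  have hts : t ⊆ s := fun b hb => hs b (Finset.mem_filter.mp hb).2
  have hqt : ∀ b ∈ t, 0 < q b := fun b hb =>
    lt_of_le_of_ne (h0 b) (Ne.symm (Finset.mem_filter.mp hb).2)
  have hsum_t : ∑ b ∈ t, q b = 1 := by
    rw [← h1]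
    exact Finset.sum_subset (Finset.subset_univ t)
      (fun b _ hb => by
        by_contra h
        exact hb (Finset.mem_filter.mpr ⟨Finset.mem_univ b, h⟩))
  have htne : t.Nonempty := by
    by_contra h
    rw [Finset.not_nonempty_iff_eq_empty] at h
    rw [h, Finset.sum_empty] at hsum_t
    norm_num at hsum_t
  -- rewrite LHS as a sum over t of q b * log (q b)⁻¹ / log 2
  have hL : (-∑ b, q b * Real.logb 2 (q b)) = ∑ b ∈ t, q b * Real.log (q b)⁻¹ / Real.log 2 := by
    rw [← Finset.sum_neg_distrib]
    refine (Finset.sum_subset (Finset.subset_univ t) ?_).symm.trans ?_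
    · intro b _ hb
      have : q b = 0 := by
        by_contra h
        exact hb (Finset.mem_filter.mpr ⟨Finset.mem_univ b, h⟩)
      simp [this]
    · refine Finset.sum_congr rfl fun b hb => ?_
      rw [Real.logb, Real.log_inv]
      ring
  rw [hL]
  -- Jensen
  have hjensen : ∑ b ∈ t, q b * Real.log (q b)⁻¹ ≤ Real.log t.card := by
    have hcc : ConcaveOn ℝ (Set.Ioi 0) Real.log := strictConcaveOn_log_Ioi.concaveOn
    have := hcc.le_map_sum (t := t) (w := q) (p := fun b => (q b)⁻¹)
      (fun b hb => h0 b) hsum_t (fun b hb => by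
        simp only [Set.mem_Ioi]
        exact inv_pos.mpr (hqt b hb))
    simp only [smul_eq_mul] at this
    refine this.trans_eq ?_
    congr 1
    rw [Finset.sum_congr rfl (fun b hb => mul_inv_cancel₀ (ne_of_gt (hqt b hb)))]
    simp
  have hlog2 : (0:ℝ) < Real.log 2 := Real.log_pos one_lt_two
  rw [← Finset.sum_div, Real.logb]
  have hcard : Real.log t.card ≤ Real.log s.card := by
    apply Real.log_le_log (by exact_mod_cast htne.card_pos)
    exact_mod_cast Finset.card_le_card hts
  have := hjensen.trans hcard
  gcongr

/-- The marginal entropy is at most the joint entropy. -/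
lemma aux_marginal_le_joint {n m : ℕ} (p : Fin n × Fin m → ℝ) (h0 : ∀ q, 0 ≤ p q) :
    (-∑ a, (∑ b, p (a, b)) * Real.logb 2 (∑ b, p (a, b))) ≤
      -∑ q, p q * Real.logb 2 (p q) := by
  rw [neg_le_neg_iff]
  rw [Fintype.sum_prod_type]
  refine Finset.sum_le_sum fun a _ => ?_
  rw [Finset.sum_mul]
  refine Finset.sum_le_sum fun b _ => ?_
  rcases eq_or_lt_of_le (h0 (a, b)) with h | h
  · simp [← h]
  · apply mul_le_mul_of_nonneg_left ?_ (h0 (a, b))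
    apply Real.logb_le_logb_of_le one_lt_two h
    exact Finset.single_le_sum (fun c _ => h0 (a, c)) (Finset.mem_univ b)

lemma aux_finMI_le {n m : ℕ} (p : Fin n × Fin m → ℝ) (h0 : ∀ q, 0 ≤ p q)
    (hsum : ∑ q, p q = 1) (s : Finset (Fin m)) (hs : ∀ b, (∑ a, p (a, b)) ≠ 0 → b ∈ s)
    (k : ℕ) (hcard : s.card ≤ k) : finMI p ≤ Real.logb 2 k := by
  have hE1 := aux_marginal_le_joint p h0
  have hsum_b : ∑ b, (∑ a, p (a, b)) = 1 := by
    rw [← hsum, Fintype.sum_prod_type_right]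
  have hB := aux_entropy_le (fun b => ∑ a, p (a, b))
    (fun b => Finset.sum_nonneg fun a _ => h0 _) hsum_b s hs
  have hspos : 0 < s.card := by
    rcases Finset.eq_empty_or_nonempty s with h | h
    · exfalso
      have : ∑ b, (∑ a, p (a, b)) = 0 := by
        refine Finset.sum_eq_zero fun b _ => ?_
        by_contra hb
        simpa [h] using hs b hb
      rw [hsum_b] at this
      norm_num at this
    · exact h.card_pos
  have hcard' : Real.logb 2 s.card ≤ Real.logb 2 k :=
    Real.logb_le_logb_of_le one_lt_two (by exact_mod_cast hspos) (by exact_mod_cast hcard)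
  unfold finMI
  have hB' := hB.trans hcard'
  linarith

lemma aux_mutualInfo_le {A B : Type*} [MeasurableSpace A] [MeasurableSpace B]
    (μ : Measure A) [IsProbabilityMeasure μ] {n : ℕ}
    (F : A → Fin n) (hF : Measurable F) (e : Fin n → B) (he : Measurable e) :
    mutualInfo (μ.map (fun x => (x, e (F x)))) ≤ ENNReal.ofReal (Real.logb 2 n) := by
  classical
  have hmeas : Measurable (fun x => (x, e (F x))) := measurable_id.prodMk (he.comp hF)
  set π := μ.map (fun x => (x, e (F x))) with hπ
  haveI : IsProbabilityMeasure π := Measure.isProbabilityMeasure_map hmeas.aemeasurable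
  refine iSup_le fun n' => iSup_le fun m => iSup_le fun P => iSup_le fun hP =>
    iSup_le fun Q => iSup_le fun hQ => ?_
  apply ENNReal.ofReal_le_ofReal
  have hSmeas : ∀ q : Fin n' × Fin m, MeasurableSet {z : A × B | P z.1 = q.1 ∧ Q z.2 = q.2} := by
    intro q
    have : {z : A × B | P z.1 = q.1 ∧ Q z.2 = q.2} =
        (P ∘ Prod.fst) ⁻¹' {q.1} ∩ (Q ∘ Prod.snd) ⁻¹' {q.2} := by
      ext z; simp [Set.mem_inter_iff]
    rw [this]
    exact ((hP.comp measurable_fst) (measurableSet_singleton _)).inter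
      ((hQ.comp measurable_snd) (measurableSet_singleton _))
  refine aux_finMI_le _ (fun q => ENNReal.toReal_nonneg) ?_
    (Finset.univ.image (fun i => Q (e i))) ?_ n (Finset.card_image_le.trans (by simp)) 
  · -- total mass 1
    have hdisj : Pairwise (Function.onFun Disjoint
        (fun q : Fin n' × Fin m => {z : A × B | P z.1 = q.1 ∧ Q z.2 = q.2})) := by
      intro q q' hqq'
      refine Set.disjoint_left.mpr fun z hz hz' => hqq' ?_
      exact Prod.ext (hz.1.symm.trans hz'.1) (hz.2.symm.trans hz'.2)
    have hunion : (⋃ q : Fin n' × Fin m, {z : A × B | P z.1 = q.1 ∧ Q z.2 = q.2}) =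
        Set.univ := by
      ext z
      simp only [Set.mem_iUnion, Set.mem_univ, iff_true, Set.mem_setOf_eq]
      exact ⟨(P z.1, Q z.2), rfl, rfl⟩
    have hIU := measure_iUnion hdisj hSmeas (μ := π)
    rw [hunion, measure_univ, tsum_fintype] at hIU
    rw [← ENNReal.toReal_sum (fun q _ => measure_ne_top π _), ← hIU]
    simp
  · -- support
    intro b hb
    by_contra hbs
    apply hb
    refine Finset.sum_eq_zero fun a _ => ?_
    have hz : π {z : A × B | P z.1 = (a, b).1 ∧ Q z.2 = (a, b).2} = 0 := by
      rw [hπ, Measure.map_apply hmeas (hSmeas (a, b))]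
      convert measure_empty (μ := μ)
      · ext x
        simp only [Set.mem_preimage, Set.mem_setOf_eq, Set.mem_empty_iff_false, iff_false,
          not_and]
        intro _ h2
        exact absurd (Finset.mem_image.mpr ⟨F x, Finset.mem_univ _, h2⟩) hbs
    simp [hz]

lemma aux_dynDist_cont {X : Type*} [MetricSpace X] {T : X → X} (hT : Continuous T)
    {N : ℕ} (hN : 1 ≤ N) (y : X) : Continuous fun x => dynDist T N x y := by
  haveI : Nonempty (Fin N) := ⟨⟨0, hN⟩⟩
  have heq : (fun x => dynDist T N x y) =
      fun x => Finset.univ.sup' Finset.univ_nonempty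
        (fun k : Fin N => dist (T^[(k : ℕ)] x) (T^[(k : ℕ)] y)) := by
    funext x
    simp only [dynDist, ← Finset.sup'_univ_eq_ciSup]
  rw [heq]
  exact Continuous.finset_sup'_apply Finset.univ_nonempty
    (fun k _ => (hT.iterate (k : ℕ)).dist continuous_const)

lemma aux_le_dynDist {X : Type*} [MetricSpace X] {T : X → X} {N : ℕ}
    (x y : X) (k : Fin N) : dist (T^[(k : ℕ)] x) (T^[(k : ℕ)] y) ≤ dynDist T N x y := by
  simp only [dynDist]
  exact le_ciSup (f := fun k : Fin N => dist (T^[(k : ℕ)] x) (T^[(k : ℕ)] y))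
    (Set.Finite.bddAbove (Set.finite_range _)) k

lemma aux_cov_nonempty {X : Type*} [MetricSpace X] [CompactSpace X]
    (T : X ≃ₜ X) {N : ℕ} (hN : 1 ≤ N) {ε : ℝ} (hε : 0 < ε) :
    {k : ℕ | ∃ U : Fin k → Set X, (⋃ i, U i) = Set.univ ∧
      ∀ i, ∀ x ∈ U i, ∀ y ∈ U i, dynDist (⇑T) N x y < ε}.Nonempty := by
  haveI : Nonempty (Fin N) := ⟨⟨0, hN⟩⟩
  have hUC : ∀ k : ℕ, ∃ δ, 0 < δ ∧ ∀ x y : X, dist x y < δ →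
      dist ((⇑T)^[k] x) ((⇑T)^[k] y) < ε / 2 := by
    intro k
    have h := CompactSpace.uniformContinuous_of_continuous (T.continuous.iterate k)
    obtain ⟨δ, hδ, h2⟩ := Metric.uniformContinuous_iff.mp h (ε / 2) (half_pos hε)
    exact ⟨δ, hδ, fun x y hxy => h2 hxy⟩
  choose δf hδf hδf2 using hUC
  have hrne : (Finset.range N).Nonempty := ⟨0, Finset.mem_range.mpr hN⟩
  set δ := (Finset.range N).inf' hrne δf with hδdef
  have hδpos : 0 < δ := (Finset.lt_inf'_iff hrne).mpr fun k _ => hδf k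
  obtain ⟨t, ht⟩ := isCompact_univ.elim_finite_subcover
    (fun c : X => Metric.ball c (δ / 2)) (fun _ => Metric.isOpen_ball)
    (fun x _ => Set.mem_iUnion.mpr ⟨x, Metric.mem_ball_self (half_pos hδpos)⟩)
  refine ⟨t.card, fun i =>
    Metric.ball (((Fintype.equivFinOfCardEq (Fintype.card_coe t)).symm i : t) : X) (δ / 2),
    ?_, ?_⟩
  · apply Set.eq_univ_of_univ_subset
    intro x hx
    obtain ⟨c, hc, hxc⟩ := Set.mem_iUnion₂.mp (ht hx)
    refine Set.mem_iUnion.mpr ⟨Fintype.equivFinOfCardEq (Fintype.card_coe t) ⟨c, hc⟩, ?_⟩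
    simpa using hxc
  · intro i x hx y hy
    have hx' := Metric.mem_ball.mp hx
    have hy' := Metric.mem_ball.mp hy
    have hxy : dist x y < δ := by
      calc dist x y ≤ dist x _ + dist y _ := dist_triangle_right _ _ _
        _ < δ / 2 + δ / 2 := add_lt_add hx' hy'
        _ = δ := add_halves δ
    show (⨆ k : Fin N, dist ((⇑T)^[(k : ℕ)] x) ((⇑T)^[(k : ℕ)] y)) < ε
    refine lt_of_le_of_lt (ciSup_le fun k => ?_) (half_lt_self hε)
    have hk : δ ≤ δf (k : ℕ) := Finset.inf'_le δf (Finset.mem_range.mpr k.2)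
    exact (hδf2 (k : ℕ) x y (lt_of_lt_of_le hxy hk)).le

lemma aux_key {X : Type*} [MetricSpace X] [CompactSpace X] [MeasurableSpace X]
    [BorelSpace X] (T : X ≃ₜ X) (μ : Measure X) [IsProbabilityMeasure μ]
    {ε : ℝ} (hε : 0 < ε) {N : ℕ} (hN : 1 ≤ N) :
    rateDistortion (⇑T) dist μ ε ≤
      ENNReal.ofReal (Real.logb 2 ((covNum (dynDist (⇑T) N) ε : ℕ) : ℝ) / N) := by
  classical
  haveI : Nonempty X := by
    by_contra h
    rw [not_nonempty_iff] at h
    have h1 : μ Set.univ = 1 := measure_univ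
    rw [Set.univ_eq_empty_iff.mpr h, measure_empty] at h1
    norm_num at h1
  haveI : Nonempty (Fin N) := ⟨⟨0, hN⟩⟩
  set n := covNum (dynDist (⇑T) N) ε with hn
  obtain ⟨U, hUcov, hUsmall⟩ : ∃ U : Fin n → Set X, (⋃ i, U i) = Set.univ ∧
      ∀ i, ∀ x ∈ U i, ∀ y ∈ U i, dynDist (⇑T) N x y < ε :=
    Nat.sInf_mem (aux_cov_nonempty T hN hε)
  have hcex : ∀ i : Fin n, ∃ c : X, (U i).Nonempty → c ∈ U i := fun i => by
    rcases Set.eq_empty_or_nonempty (U i) with h | h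
    · exact ⟨Classical.arbitrary X, fun h' => absurd h' (by simp [h])⟩
    · exact ⟨h.choose, fun _ => h.choose_spec⟩
  choose c hc using hcex
  set M : Fin n → Set X := fun i => {x | dynDist (⇑T) N x (c i) < ε} with hM
  have hUM : ∀ i, U i ⊆ M i := fun i x hx => hUsmall i x hx (c i) (hc i ⟨x, hx⟩)
  have hMopen : ∀ i, MeasurableSet (M i) := fun i =>
    (isOpen_lt (aux_dynDist_cont T.continuous hN (c i)) continuous_const).measurableSet
  have hex : ∀ x : X, ∃ i, x ∈ M i := fun x => by
    have hx : x ∈ ⋃ i, U i := hUcov ▸ Set.mem_univ x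
    obtain ⟨i, hi⟩ := Set.mem_iUnion.mp hx
    exact ⟨i, hUM i hi⟩
  set F : X → Fin n := fun x =>
    (Finset.univ.filter (fun i => x ∈ M i)).min'
      ⟨(hex x).choose, Finset.mem_filter.mpr ⟨Finset.mem_univ _, (hex x).choose_spec⟩⟩
    with hF
  have hFmem : ∀ x, x ∈ M (F x) := fun x => by
    have hmm := Finset.min'_mem (Finset.univ.filter (fun i => x ∈ M i))
      ⟨(hex x).choose, Finset.mem_filter.mpr ⟨Finset.mem_univ _, (hex x).choose_spec⟩⟩
    exact (Finset.mem_filter.mp hmm).2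
  have hFiff : ∀ x (i : Fin n), F x = i ↔ x ∈ M i ∧ ∀ j, j < i → x ∉ M j := by
    intro x i
    constructor
    · rintro rfl
      exact ⟨hFmem x, fun j hj hmem =>
        absurd (Finset.min'_le _ j (Finset.mem_filter.mpr ⟨Finset.mem_univ _, hmem⟩))
          (not_le.mpr hj)⟩
    · rintro ⟨h1, h2⟩
      apply le_antisymm
      · exact Finset.min'_le _ i (Finset.mem_filter.mpr ⟨Finset.mem_univ _, h1⟩)
      · by_contra hlt
        exact h2 (F x) (not_le.mp hlt) (hFmem x)
  have hFmeas : Measurable F := by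
    apply measurable_to_countable'
    intro i
    have hpre : F ⁻¹' {i} = M i ∩ ⋂ (j : Fin n), ⋂ (_ : j < i), (M j)ᶜ := by
      ext x
      simp only [Set.mem_preimage, Set.mem_singleton_iff, hFiff, Set.mem_inter_iff,
        Set.mem_iInter, Set.mem_compl_iff]
    rw [hpre]
    exact (hMopen i).inter (MeasurableSet.iInter fun j => MeasurableSet.iInter
      fun _ => (hMopen j).compl)
  set e : Fin n → (Fin N → X) := fun i k => (⇑T)^[(k : ℕ)] (c i) with he
  have hemeas : Measurable e := measurable_of_countable e
  set h : X → X × (Fin N → X) := fun x => (x, e (F x)) with hh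
  have hmeas : Measurable h := measurable_id.prodMk (hemeas.comp hFmeas)
  set π : Measure (X × (Fin N → X)) := μ.map h with hπ
  haveI hprob : IsProbabilityMeasure π := Measure.isProbabilityMeasure_map hmeas.aemeasurable
  have hmap : π.map Prod.fst = μ := by
    rw [hπ, Measure.map_map measurable_fst hmeas]
    have : Prod.fst ∘ h = id := rfl
    rw [this, Measure.map_id]
  have hNpos : (0 : ℝ) < N := by exact_mod_cast hN
  set φ : X → ℝ := fun x =>
    (1 / (N : ℝ)) * ∑ k : Fin N, dist ((⇑T)^[(k : ℕ)] x) (e (F x) k) with hφ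
  have hφlt : ∀ x, φ x < ε := by
    intro x
    have hsum : ∑ k : Fin N, dist ((⇑T)^[(k : ℕ)] x) (e (F x) k) < N * ε := by
      have hlt := Finset.sum_lt_sum_of_nonempty (Finset.univ_nonempty (α := Fin N))
        (f := fun k : Fin N => dist ((⇑T)^[(k : ℕ)] x) (e (F x) k))
        (g := fun _ => ε)
        (fun k _ => lt_of_le_of_lt (aux_le_dynDist (T := ⇑T) x (c (F x)) k) (hFmem x))
      calc ∑ k : Fin N, dist ((⇑T)^[(k : ℕ)] x) (e (F x) k)
          < ∑ _k : Fin N, ε := hlt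
        _ = N * ε := by simp [Finset.sum_const, Finset.card_univ, nsmul_eq_mul]
    calc φ x < (1 / (N : ℝ)) * (N * ε) :=
          mul_lt_mul_of_pos_left hsum (by positivity)
      _ = ε := by field_simp
  have hφnonneg : ∀ x, 0 ≤ φ x := fun x =>
    mul_nonneg (by positivity) (Finset.sum_nonneg fun k _ => dist_nonneg)
  have hφmeas : Measurable φ := by
    apply Measurable.const_mul
    apply Finset.measurable_sum
    intro k _
    exact Measurable.dist (T.continuous.iterate (k : ℕ)).measurable
      ((measurable_of_countable (fun i => e i k)).comp hFmeas)
  have hφint : Integrable φ μ := by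
    refine Integrable.mono' (integrable_const ε) hφmeas.aestronglyMeasurable
      (Filter.Eventually.of_forall fun x => ?_)
    rw [Real.norm_eq_abs, abs_of_nonneg (hφnonneg x)]
    exact (hφlt x).le
  have hint_lt : ∫ x, φ x ∂μ < ε := by
    have hsub : Integrable (fun x => ε - φ x) μ := (integrable_const ε).sub hφint
    have hpos : 0 < ∫ x, (ε - φ x) ∂μ := by
      rcases lt_or_eq_of_le (integral_nonneg fun x => sub_nonneg.mpr (hφlt x).le)
        with hlt | heq
      · exact hlt
      · exfalso
        have h0 := (integral_eq_zero_iff_of_nonneg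
          (fun x => sub_nonneg.mpr (hφlt x).le) hsub).mp heq.symm
        have hFalse : ∀ᵐ x ∂μ, False := by
          filter_upwards [h0] with x hx
          exact (hφlt x).ne' (sub_eq_zero.mp hx)
        rw [Filter.eventually_false_iff_eq_bot, ae_eq_bot] at hFalse
        exact (IsProbabilityMeasure.ne_zero μ) hFalse
    have heq2 : ∫ x, (ε - φ x) ∂μ = ε - ∫ x, φ x ∂μ := by
      rw [integral_sub (integrable_const ε) hφint, integral_const]
      simp
    rw [heq2] at hpos
    linarith
  have hdist : ∫ z, (1 / (N : ℝ)) *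
      ∑ k : Fin N, dist ((⇑T)^[(k : ℕ)] z.1) (z.2 k) ∂π < ε := by
    rw [hπ, integral_map hmeas.aemeasurable]
    · exact hint_lt
    · apply Continuous.aestronglyMeasurable
      exact continuous_const.mul (continuous_finset_sum _ fun k _ =>
        Continuous.dist ((T.continuous.iterate (k : ℕ)).comp continuous_fst)
          ((continuous_apply k).comp continuous_snd))
  have hMI : mutualInfo π ≤ ENNReal.ofReal (Real.logb 2 n) :=
    aux_mutualInfo_le μ F hFmeas e hemeas
  calc rateDistortion (⇑T) dist μ ε ≤ mutualInfo π / (N : ℝ≥0∞) := by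
        refine iInf_le_of_le N ?_
        refine iInf_le_of_le hN ?_
        refine iInf_le_of_le π ?_
        refine iInf_le_of_le hprob ?_
        refine iInf_le_of_le hmap ?_
        exact iInf_le_of_le hdist le_rfl
    _ ≤ ENNReal.ofReal (Real.logb 2 n) / (N : ℝ≥0∞) := ENNReal.div_le_div_right hMI _
    _ = ENNReal.ofReal (Real.logb 2 (n : ℝ) / N) := by
        rw [ENNReal.ofReal_div_of_pos hNpos, ENNReal.ofReal_natCast]


lemma aux_a_bounded {X : Type*} [MetricSpace X] [CompactSpace X]
    (T : X ≃ₜ X) {ε : ℝ} (hε : 0 < ε) {N : ℕ} (hN : 1 ≤ N) :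
    Real.logb 2 ((covNum (dynDist (⇑T) N) ε : ℕ) : ℝ) / N ≤
      Real.logb 2 ((covNum (dynDist (⇑T) 1) ε : ℕ) : ℝ) := by
  classical
  haveI : Nonempty (Fin N) := ⟨⟨0, hN⟩⟩
  set c := covNum (dynDist (⇑T) 1) ε with hc
  obtain ⟨U, hUcov, hUsmall⟩ : ∃ U : Fin c → Set X, (⋃ i, U i) = Set.univ ∧
      ∀ i, ∀ x ∈ U i, ∀ y ∈ U i, dynDist (⇑T) 1 x y < ε :=
    Nat.sInf_mem (aux_cov_nonempty T le_rfl hε)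
  have hUd : ∀ i, ∀ u ∈ U i, ∀ v ∈ U i, dist u v < ε := by
    intro i u hu v hv
    have h2 := hUsmall i u hu v hv
    simpa [dynDist, ciSup_unique] using h2
  have hle : covNum (dynDist (⇑T) N) ε ≤ c ^ N := by
    apply Nat.sInf_le
    refine ⟨fun j => ⋂ k : Fin N,
      ((⇑T)^[(k : ℕ)]) ⁻¹' U (finFunctionFinEquiv.symm j k), ?_, ?_⟩
    · apply Set.eq_univ_of_univ_subset
      intro x _
      have hσ : ∀ k : Fin N, ∃ i, (⇑T)^[(k : ℕ)] x ∈ U i := fun k =>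
        Set.mem_iUnion.mp (hUcov ▸ Set.mem_univ _)
      choose σ hσ using hσ
      refine Set.mem_iUnion.mpr ⟨finFunctionFinEquiv σ, Set.mem_iInter.mpr fun k => ?_⟩
      simp only [Equiv.symm_apply_apply]
      exact hσ k
    · intro j x hx y hy
      show (⨆ k : Fin N, dist ((⇑T)^[(k : ℕ)] x) ((⇑T)^[(k : ℕ)] y)) < ε
      rw [← Finset.sup'_univ_eq_ciSup, Finset.sup'_lt_iff]
      intro k _
      exact hUd _ _ (Set.mem_iInter.mp hx k) _ (Set.mem_iInter.mp hy k)
  have hNpos : (0 : ℝ) < N := by exact_mod_cast hN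
  rcases Nat.eq_zero_or_pos (covNum (dynDist (⇑T) N) ε) with h0 | hpos
  · rw [h0]
    simp only [Nat.cast_zero, Real.logb_zero, zero_div]
    exact aux_logb_nat_nonneg c
  · have hlog : Real.logb 2 ((covNum (dynDist (⇑T) N) ε : ℕ) : ℝ) ≤
        (N : ℝ) * Real.logb 2 (c : ℝ) := by
      have := Real.logb_le_logb_of_le one_lt_two (by exact_mod_cast hpos)
        (by exact_mod_cast hle : ((covNum (dynDist (⇑T) N) ε : ℕ) : ℝ) ≤ ((c : ℝ)) ^ N)
      rwa [Real.logb_pow] at this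
    rw [div_le_iff₀ hNpos]
    linarith [hlog]

/-- rate distortion dimension is bounded by metric mean dimension:
`R(d,μ,ε) ≤ S(X,T,d,ε)` for every `ε > 0`, and consequently both the upper and lower
rate distortion dimensions are bounded by the corresponding metric mean dimensions. -/
theorem statement16 {X : Type*} [MetricSpace X] [CompactSpace X]
    [MeasurableSpace X] [BorelSpace X] (T : X ≃ₜ X) (μ : Measure X)
    [IsProbabilityMeasure μ] (hinv : MeasurePreserving (⇑T) μ μ) :
    (∀ ε : ℝ, 0 < ε →
      rateDistortion (⇑T) dist μ ε ≤ ENNReal.ofReal (entS (⇑T) ε)) ∧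
    Filter.limsup (fun ε : ℝ =>
        rateDistortion (⇑T) dist μ ε / ENNReal.ofReal (Real.logb 2 (1 / ε)))
      (nhdsWithin 0 (Set.Ioi 0)) ≤
      Filter.limsup (fun ε : ℝ =>
        ENNReal.ofReal (entS (⇑T) ε / Real.logb 2 (1 / ε)))
      (nhdsWithin 0 (Set.Ioi 0)) ∧
    Filter.liminf (fun ε : ℝ =>
        rateDistortion (⇑T) dist μ ε / ENNReal.ofReal (Real.logb 2 (1 / ε)))
      (nhdsWithin 0 (Set.Ioi 0)) ≤
      Filter.liminf (fun ε : ℝ =>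
        ENNReal.ofReal (entS (⇑T) ε / Real.logb 2 (1 / ε)))
      (nhdsWithin 0 (Set.Ioi 0)) := by
  have hanonneg : ∀ (ε : ℝ) (N : ℕ),
      0 ≤ Real.logb 2 ((covNum (dynDist (⇑T) N) ε : ℕ) : ℝ) / N := fun ε N =>
    div_nonneg (aux_logb_nat_nonneg _) (Nat.cast_nonneg _)
  have hcb : ∀ ε : ℝ, 0 < ε → Filter.IsCoboundedUnder (· ≥ ·) Filter.atTop
      (fun N : ℕ => Real.logb 2 ((covNum (dynDist (⇑T) N) ε : ℕ) : ℝ) / N) := fun ε hε =>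
    Filter.isCoboundedUnder_ge_of_eventually_le Filter.atTop
      (Filter.eventually_atTop.mpr ⟨1, fun N hN => aux_a_bounded T hε hN⟩)
  have hentS_nonneg : ∀ ε : ℝ, 0 < ε → 0 ≤ entS (⇑T) ε := fun ε hε =>
    Filter.le_liminf_of_le (hcb ε hε) (Filter.Eventually.of_forall fun N => hanonneg ε N)
  have hpart1 : ∀ ε : ℝ, 0 < ε →
      rateDistortion (⇑T) dist μ ε ≤ ENNReal.ofReal (entS (⇑T) ε) := by
    intro ε hε
    have hkey : ∀ N : ℕ, 1 ≤ N → rateDistortion (⇑T) dist μ ε ≤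
        ENNReal.ofReal (Real.logb 2 ((covNum (dynDist (⇑T) N) ε : ℕ) : ℝ) / N) :=
      fun N hN => aux_key T μ hε hN
    have hfin : rateDistortion (⇑T) dist μ ε ≠ ⊤ :=
      ne_top_of_le_ne_top ENNReal.ofReal_ne_top (hkey 1 le_rfl)
    have htr : ∀ N : ℕ, 1 ≤ N → (rateDistortion (⇑T) dist μ ε).toReal ≤
        Real.logb 2 ((covNum (dynDist (⇑T) N) ε : ℕ) : ℝ) / N :=
      fun N hN => ENNReal.toReal_le_of_le_ofReal (hanonneg ε N) (hkey N hN)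
    have hlim : (rateDistortion (⇑T) dist μ ε).toReal ≤ entS (⇑T) ε :=
      Filter.le_liminf_of_le (hcb ε hε) (Filter.eventually_atTop.mpr ⟨1, htr⟩)
    exact (ENNReal.le_ofReal_iff_toReal_le hfin (hentS_nonneg ε hε)).mpr hlim
  have hev : ∀ᶠ ε in nhdsWithin (0:ℝ) (Set.Ioi 0),
      rateDistortion (⇑T) dist μ ε / ENNReal.ofReal (Real.logb 2 (1 / ε)) ≤
      ENNReal.ofReal (entS (⇑T) ε / Real.logb 2 (1 / ε)) := by
    filter_upwards [Ioo_mem_nhdsGT_of_mem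
      (⟨le_refl (0:ℝ), one_pos⟩ : (0:ℝ) ∈ Set.Ico (0:ℝ) 1)] with ε hε
    have hL : 0 < Real.logb 2 (1 / ε) :=
      Real.logb_pos one_lt_two (one_lt_one_div hε.1 hε.2)
    rw [ENNReal.ofReal_div_of_pos hL]
    exact ENNReal.div_le_div_right (hpart1 ε hε.1) _
  exact ⟨hpart1, Filter.limsup_le_limsup hev, Filter.liminf_le_liminf hev⟩
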